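/- The translation h is Boolean preserving with respect to ⊢d3: for all sentences φ, ψ of L3 one has ⊢d3 h(φ∧ψ) ↔ (h(φ) ∧ h(ψ)) and ⊢d3 h(φ→ψ) → (h(φ) → h(ψ)); moreover SAx* ⊢d3 h(¬φ) → ¬h(φ) for every sentence φ of L3. -/
import Mathlib


/- Core: the logic Ld3 : syntax, proof system, semantics, Gödel numbering. -/

inductive Var : Type
  | x
  | y
  | z
deriving DecidableEq

def Var.toNat : Var → Nat
  | .x => 0
  | .y => 1
  | .z => 2

/-- Formulas of the logic `Ld3`: one atomic formula `P(x,y,z)`, connectives `∨, ¬`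
and quantifiers `∃x, ∃y, ∃z`. -/
inductive Fmd3 : Type
  | P : Fmd3
  | or : Fmd3 → Fmd3 → Fmd3
  | not : Fmd3 → Fmd3
  | ex : Var → Fmd3 → Fmd3
deriving DecidableEq

namespace Fmd3

def and (φ ψ : Fmd3) : Fmd3 := .not (.or (.not φ) (.not ψ))

def imp (φ ψ : Fmd3) : Fmd3 := .or (.not φ) ψ

def iff (φ ψ : Fmd3) : Fmd3 := (φ.imp ψ).and (ψ.imp φ)

def all (v : Var) (φ : Fmd3) : Fmd3 := .not (.ex v (.not φ))

def freeVars : Fmd3 → Finset Var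
  | .P => {Var.x, Var.y, Var.z}
  | .or a b => a.freeVars ∪ b.freeVars
  | .not a => a.freeVars
  | .ex v a => a.freeVars.erase v

/-- `Fmd3⁰`: sentences. -/
def IsSentence (φ : Fmd3) : Prop := φ.freeVars = ∅

/-- `Fmd3¹`: formulas whose only free variable is `x`. -/
def OneFree (φ : Fmd3) : Prop := φ.freeVars ⊆ {Var.x}

/-- `φ` is a propositional tautology: every Boolean valuation that respects
`∨` and `¬` (treating other formulas as propositional atoms) makes `φ` true. -/
def Taut (φ : Fmd3) : Prop :=
  ∀ v : Fmd3 → Bool,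
    (∀ a b : Fmd3, v (.or a b) = (v a || v b)) →
    (∀ a : Fmd3, v (.not a) = !(v a)) →
    v φ = true

/-- Satisfaction of an `Fmd3` formula in a model `(M, R)` under evaluation `e`. -/
def Sat (M : Type) (R : M → M → M → Prop) : Fmd3 → (Var → M) → Prop
  | .P, e => R (e .x) (e .y) (e .z)
  | .or a b, e => Sat M R a e ∨ Sat M R b e
  | .not a, e => ¬ Sat M R a e
  | .ex v a, e => ∃ m : M, Sat M R a (Function.update e v m)

/-- A standard (injective) Gödel numbering of `Fmd3`. -/
def encode : Fmd3 → Nat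
  | .P => 0
  | .or a b => 4 * Nat.pair a.encode b.encode + 1
  | .not a => 4 * a.encode + 2
  | .ex v a => 4 * Nat.pair v.toNat a.encode + 3

end Fmd3

/-- The Hilbert-style proof system `⊢d3`, with rules Modus Ponens and Generalization,
and axiom schemes ((1))–((7)). -/
inductive Prf (T : Set Fmd3) : Fmd3 → Prop
  | hyp {φ : Fmd3} : φ ∈ T → Prf T φ
  | taut {φ : Fmd3} : φ.Taut → Prf T φ
  | ax2 (v : Var) (φ ψ : Fmd3) :
      Prf T ((Fmd3.all v (φ.imp ψ)).imp ((Fmd3.ex v φ).imp (Fmd3.ex v ψ)))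
  | ax3 (v : Var) (φ : Fmd3) : Prf T (φ.imp (.ex v φ))
  | ax4 (v : Var) (φ : Fmd3) : Prf T ((Fmd3.ex v (.ex v φ)).imp (.ex v φ))
  | ax5 (v : Var) (φ ψ : Fmd3) :
      Prf T ((Fmd3.ex v (φ.or ψ)).iff ((Fmd3.ex v φ).or (.ex v ψ)))
  | ax6 (v : Var) (φ : Fmd3) :
      Prf T ((Fmd3.ex v (.not (.ex v φ))).imp (.not (.ex v φ)))
  | ax7 (v w : Var) (φ : Fmd3) :
      Prf T ((Fmd3.ex v (.ex w φ)).imp (.ex w (.ex v φ)))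
  | mp {φ ψ : Fmd3} : Prf T (φ.imp ψ) → Prf T φ → Prf T ψ
  | gen {φ : Fmd3} (v : Var) : Prf T φ → Prf T (.all v φ)

/-- Semantic consequence for `Ld3`: every model of `T` satisfies `φ` under every
evaluation. -/
def SemConsD (T : Set Fmd3) (φ : Fmd3) : Prop :=
  ∀ (M : Type) (_ : Nonempty M) (R : M → M → M → Prop),
    (∀ ψ ∈ T, ∀ e : Var → M, ψ.Sat M R e) → ∀ e : Var → M, φ.Sat M R e

/-- Validity for `Ld3`. -/
def ValidD (φ : Fmd3) : Prop := SemConsD ∅ φ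

/-- A set of `Fmd3`-formulas is recursive (decidable w.r.t. the standard
Gödel numbering). -/
def RecSetD (S : Set Fmd3) : Prop :=
  ∃ g : Nat → Bool, Computable g ∧ ∀ φ : Fmd3, φ ∈ S ↔ g φ.encode = true

/- Parameter formulas δxy, δxz, p0, p1; simulated equality and substitution;
pairing axioms Ax and SAx; the relation-algebra and cylindric-algebra reducts. -/

structure Params where
  dxy : Fmd3
  dxz : Fmd3
  p0 : Fmd3
  p1 : Fmd3

/-- The required free-variable sets of the parameter formulas. -/
def GoodParams (P : Params) : Prop :=
  P.dxy.freeVars = {Var.x, Var.y} ∧ P.dxz.freeVars = {Var.x, Var.z} ∧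
    P.p0.freeVars = {Var.x, Var.y} ∧ P.p1.freeVars = {Var.x, Var.y}

/-- A provably true formula. -/
def trueF (P : Params) : Fmd3 := P.dxy.or P.dxy.not

/-- Simulated equality `u ≐ v` between variables. -/
def eqvF (P : Params) : Var → Var → Fmd3
  | .x, .y => P.dxy
  | .y, .x => P.dxy
  | .x, .z => P.dxz
  | .z, .x => P.dxz
  | .y, .z => .ex .x (P.dxy.and P.dxz)
  | .z, .y => .ex .x (P.dxy.and P.dxz)
  | _, _ => trueF P

/- Tarski-style simulated substitution `φ⟨u,v⟩` for `φ` with free variables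
among `{x,y}`. -/
def sXZ (P : Params) (φ : Fmd3) : Fmd3 := .ex .y ((eqvF P .y .z).and φ)
def sYZ (P : Params) (φ : Fmd3) : Fmd3 := .ex .x ((eqvF P .x .y).and (sXZ P φ))
def sYX (P : Params) (φ : Fmd3) : Fmd3 := .ex .z ((eqvF P .x .z).and (sYZ P φ))
def sZX (P : Params) (φ : Fmd3) : Fmd3 := .ex .y ((eqvF P .y .z).and (sYX P φ))
def sZY (P : Params) (φ : Fmd3) : Fmd3 := .ex .x ((eqvF P .x .z).and φ)
def sXX (P : Params) (φ : Fmd3) : Fmd3 := .ex .y ((eqvF P .x .y).and φ)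
def sYY (P : Params) (φ : Fmd3) : Fmd3 := .ex .x ((eqvF P .x .y).and φ)
def sZZ (P : Params) (φ : Fmd3) : Fmd3 := .ex .x ((eqvF P .x .z).and (sXX P φ))

def subst2 (P : Params) (φ : Fmd3) : Var → Var → Fmd3
  | .x, .y => φ
  | .x, .z => sXZ P φ
  | .y, .z => sYZ P φ
  | .y, .x => sYX P φ
  | .z, .x => sZX P φ
  | .z, .y => sZY P φ
  | .x, .x => sXX P φ
  | .y, .y => sYY P φ
  | .z, .z => sZZ P φ

/-- The third variable, distinct from two given distinct variables. -/
def third : Var → Var → Var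
  | .x, .y => .z
  | .y, .x => .z
  | .x, .z => .y
  | .z, .x => .y
  | .y, .z => .x
  | .z, .y => .x
  | v, _ => v

def pform (P : Params) (k : Bool) (u v : Var) : Fmd3 :=
  subst2 P (if k then P.p1 else P.p0) u v

/-- `u_i ≐ v_∅` for distinct `u`, `v`, where the binary sequence `i` is given
in reverse order. -/
def peqDrev (P : Params) (u v : Var) : List Bool → Fmd3
  | [] => eqvF P u v
  | [k] => pform P k u v
  | k :: rest => .ex (third u v) ((peqDrev P u (third u v) rest).and (pform P k (third u v) v))

def peqD2 (P : Params) (u v : Var) (i j : List Bool) : Fmd3 :=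
  match j with
  | [] => peqDrev P u v i.reverse
  | _ => .ex (third u v)
      ((peqDrev P u (third u v) i.reverse).and (peqDrev P v (third u v) j.reverse))

/-- The formula `u_i ≐ v_j` simulating `p_{i_n} ⋯ p_{i_0} u = p_{j_k} ⋯ p_{j_0} v`. -/
def peq (P : Params) (u : Var) (i : List Bool) (v : Var) (j : List Bool) : Fmd3 :=
  if i = [] ∧ j = [] then eqvF P u v
  else if u = v then
    match u with
    | .x => .ex .y ((eqvF P .x .y).and (peqD2 P .x .y i j))
    | .y => .ex .x ((eqvF P .x .y).and (peqD2 P .x .y i j))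
    | .z => .ex .x ((peqDrev P .z .x i.reverse).and (peqDrev P .z .x j.reverse))
  else peqD2 P u v i j

def conjF (P : Params) : List Fmd3 → Fmd3
  | [] => trueF P
  | [a] => a
  | a :: rest => a.and (conjF P rest)

def vars3 : List Var := [.x, .y, .z]

def seqsLen : Nat → List (List Bool)
  | 0 => [[]]
  | n + 1 => (seqsLen n).flatMap fun l => [false :: l, true :: l]

/-- `H`: all binary sequences of length at most 3. -/
def seqH : List (List Bool) := seqsLen 0 ++ seqsLen 1 ++ seqsLen 2 ++ seqsLen 3

def seqH2 : List (List Bool) := seqsLen 0 ++ seqsLen 1 ++ seqsLen 2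

/-- (A1): transitivity of `≐`. -/
def axA1 (P : Params) : List Fmd3 :=
  vars3.flatMap fun u => vars3.flatMap fun v => vars3.flatMap fun w =>
    seqH.flatMap fun i => seqH.flatMap fun j => seqH.map fun k =>
      ((peq P u i v j).and (peq P v j w k)).imp (peq P u i w k)

/-- (A2): congruence of `≐` w.r.t. the projections. -/
def axA2 (P : Params) : List Fmd3 :=
  vars3.flatMap fun u => vars3.flatMap fun v =>
    seqH2.flatMap fun i => seqH2.flatMap fun j => [false, true].map fun k =>
      ((peq P u i v j).and (peq P u (i ++ [k]) u (i ++ [k]))).imp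
        (peq P u (i ++ [k]) v (j ++ [k]))

/-- (A3): existence of pairs. -/
def axA3 (P : Params) : List Fmd3 :=
  vars3.flatMap fun u => vars3.flatMap fun v =>
    (vars3.filter fun w => decide (w ≠ u ∧ w ≠ v)).flatMap fun w =>
      seqH.flatMap fun i => seqH.map fun j =>
        ((peq P u i u i).and (peq P v j v j)).imp
          (.ex w ((peq P w [false] u i).and (peq P w [true] v j)))

/-- (A4): `∃w (u ≐ w)`. -/
def axA4 (P : Params) : List Fmd3 :=
  vars3.flatMap fun u => vars3.map fun w => .ex w (eqvF P u w)

/-- The pairing axiom `Ax`. -/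
def AxF (P : Params) : Fmd3 := conjF P (axA1 P ++ axA2 P ++ axA3 P ++ axA4 P)

/-- (A5), first half: uniqueness of pairs. -/
def axA5a (P : Params) : Fmd3 :=
  ((peq P .x [false] .y [false]).and (peq P .x [true] .y [true])).imp (eqvF P .x .y)

/-- (A5), second half: the two projections have the same domain. -/
def axA5b (P : Params) : Fmd3 :=
  (peq P .x [false] .x [false]).iff (peq P .x [true] .x [true])

/-- The strong pairing axiom `SAx`. -/
def SAxF (P : Params) : Fmd3 := (AxF P).and ((axA5a P).and (axA5b P))

/-- `pair := ∃y p0 ∧ ∃y p1`. -/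
def pairF (P : Params) : Fmd3 := (Fmd3.ex .y P.p0).and (.ex .y P.p1)

/-- `φu_i := ∃x(x ≐ u_i ∧ φ)` for `u ∈ {y,z}`. -/
def appA (P : Params) (φ : Fmd3) (u : Var) (i : List Bool) : Fmd3 :=
  .ex .x ((peq P .x [] u i).and φ)

/-- Relation composition `φ ∘ ψ`. -/
def compF (P : Params) (φ ψ : Fmd3) : Fmd3 :=
  .ex .y ((appA P φ .y [false]).and ((appA P ψ .y [true]).and
    ((peq P .x [false] .y [false, false]).and
      ((peq P .y [false, true] .y [true, false]).and (peq P .y [true, true] .x [true])))))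

/-- Converse `φ⌣`. -/
def convF (P : Params) (φ : Fmd3) : Fmd3 :=
  .ex .y ((appA P φ .y []).and ((peq P .y [false] .x [true]).and (peq P .y [true] .x [false])))

/-- Identity `Id := x_0 ≐ x_1`. -/
def IdF (P : Params) : Fmd3 := peq P .x [false] .x [true]

/-- Complement `−φ := pair ∧ ¬φ`. -/
def negF (P : Params) (φ : Fmd3) : Fmd3 := (pairF P).and φ.not

/-- The universe `dra` of the relation algebra reduct. -/
def dra (P : Params) : Set Fmd3 :=
  {φ | ∃ ψ : Fmd3, ψ.OneFree ∧ Prf {AxF P} (φ.iff (compF P ψ (IdF P)))}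

/-- The congruence `φ ≡_Ax ψ`. -/
def REqv (P : Params) (φ ψ : Fmd3) : Prop := Prf {AxF P} (φ.iff ψ)

/-- `Triplet := x_{11} ≐ x_{11}`. -/
def TripletF (P : Params) : Fmd3 := peq P .x [true, true] .x [true, true]

/-- `φx_i := ∃y(y ≐ x_i ∧ φy)` for `φ ∈ Fmd3¹`. -/
def appX (P : Params) (φ : Fmd3) (i : List Bool) : Fmd3 :=
  .ex .y ((peq P .y [] .x i).and (appA P φ .y []))

/-- `(0) := 0`, `(1) := 10`, `(2) := 11`. -/
def dgt (i : Fin 3) : List Bool :=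
  if i = 0 then [false] else if i = 1 then [true, false] else [true, true]

/-- The formula `T_i`. -/
def TiF (P : Params) (i : Fin 3) : Fmd3 :=
  (appX P (TripletF P) [false]).and ((appX P (TripletF P) [true]).and
    (conjF P (((List.finRange 3).filter fun j => decide (j ≠ i)).map fun j =>
      peq P .x (false :: dgt j) .x (true :: dgt j))))

/-- Cylindrification `c_i φ := φ ∘ T_i`. -/
def ciF (P : Params) (i : Fin 3) (φ : Fmd3) : Fmd3 := compF P φ (TiF P i)

/-- Diagonal `d_{ij} := Triplet x_1 ∧ x_{1(i)} ≐ x_{1(j)}`. -/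
def dijF (P : Params) (i j : Fin 3) : Fmd3 :=
  (appX P (TripletF P) [true]).and (peq P .x (true :: dgt i) .x (true :: dgt j))

/-- Complement in `Dca`: `−φ := Triplet x_1 ∧ ¬φ`. -/
def negC (P : Params) (φ : Fmd3) : Fmd3 := (appX P (TripletF P) [true]).and φ.not

/-- The universe `dca` of the cylindric reduct. -/
def dca (P : Params) : Set Fmd3 :=
  {φ | ∃ ψ : Fmd3, ψ.OneFree ∧
    Prf {SAxF P} (φ.iff ((appX P ψ [true]).and (appX P (TripletF P) [true])))}

/-- The congruence `φ ≡_SAx ψ`. -/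
def CEqv (P : Params) (φ ψ : Fmd3) : Prop := Prf {SAxF P} (φ.iff ψ)

/- The 3-variable restricted fragment L3 of first-order logic, the concrete
parameters built from the definition Δ of P, the pairing sentences π, π⁺,
and the translation h', h from L3 into Ld3. -/

inductive Fm3 : Type
  | mem : Fm3                -- the atomic formula ∈(x,y)
  | eq : Var → Var → Fm3
  | or : Fm3 → Fm3 → Fm3
  | not : Fm3 → Fm3
  | ex : Var → Fm3 → Fm3
deriving DecidableEq

namespace Fm3

def and (φ ψ : Fm3) : Fm3 := .not (.or (.not φ) (.not ψ))

def imp (φ ψ : Fm3) : Fm3 := .or (.not φ) ψ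

def iff (φ ψ : Fm3) : Fm3 := (φ.imp ψ).and (ψ.imp φ)

def all (v : Var) (φ : Fm3) : Fm3 := .not (.ex v (.not φ))

def freeVars : Fm3 → Finset Var
  | .mem => {Var.x, Var.y}
  | .eq u v => {u, v}
  | .or a b => a.freeVars ∪ b.freeVars
  | .not a => a.freeVars
  | .ex v a => a.freeVars.erase v

def IsSentence (φ : Fm3) : Prop := φ.freeVars = ∅

def Sat (M : Type) (E : M → M → Prop) : Fm3 → (Var → M) → Prop
  | .mem, e => E (e .x) (e .y)
  | .eq u v, e => e u = e v
  | .or a b, e => Sat M E a e ∨ Sat M E b e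
  | .not a, e => ¬ Sat M E a e
  | .ex v a, e => ∃ m : M, Sat M E a (Function.update e v m)

def encode : Fm3 → Nat
  | .mem => 0
  | .eq u v => 5 * Nat.pair u.toNat v.toNat + 1
  | .or a b => 5 * Nat.pair a.encode b.encode + 2
  | .not a => 5 * a.encode + 3
  | .ex v a => 5 * Nat.pair v.toNat a.encode + 4

end Fm3

/-- First-order semantic consequence for `L3`. -/
def SemCons3 (T : Set Fm3) (φ : Fm3) : Prop :=
  ∀ (M : Type) (_ : Nonempty M) (E : M → M → Prop),
    (∀ ψ ∈ T, ∀ e : Var → M, ψ.Sat M E e) → ∀ e : Var → M, φ.Sat M E e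

/- Tarski-style substitution in `L3` (with real equality). -/
def s3XZ (φ : Fm3) : Fm3 := .ex .y ((Fm3.eq .y .z).and φ)
def s3YZ (φ : Fm3) : Fm3 := .ex .x ((Fm3.eq .x .y).and (s3XZ φ))
def s3YX (φ : Fm3) : Fm3 := .ex .z ((Fm3.eq .x .z).and (s3YZ φ))
def s3ZX (φ : Fm3) : Fm3 := .ex .y ((Fm3.eq .y .z).and (s3YX φ))
def s3ZY (φ : Fm3) : Fm3 := .ex .x ((Fm3.eq .x .z).and φ)
def s3XX (φ : Fm3) : Fm3 := .ex .y ((Fm3.eq .x .y).and φ)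
def s3YY (φ : Fm3) : Fm3 := .ex .x ((Fm3.eq .x .y).and φ)
def s3ZZ (φ : Fm3) : Fm3 := .ex .x ((Fm3.eq .x .z).and (s3XX φ))

def subst3 (φ : Fm3) : Var → Var → Fm3
  | .x, .y => φ
  | .x, .z => s3XZ φ
  | .y, .z => s3YZ φ
  | .y, .x => s3YX φ
  | .z, .x => s3ZX φ
  | .z, .y => s3ZY φ
  | .x, .x => s3XX φ
  | .y, .y => s3YY φ
  | .z, .z => s3ZZ φ

/-- `u ∈ v` in `L3`. -/
def mem3 (u v : Var) : Fm3 := subst3 .mem u v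

/-- `x = {y}`. -/
def sing3 : Fm3 := .all .z ((mem3 .z .x).iff (Fm3.eq .z .y))

/-- `{x} ∈ y`. -/
def singIn3 : Fm3 := .ex .z ((subst3 sing3 .z .x).and (mem3 .z .y))

/-- `x = {{y}}`. -/
def dsing3 : Fm3 := .ex .z ((subst3 sing3 .z .y).and (subst3 sing3 .x .z))

/-- `x ∈ ∪y`. -/
def inUn3 : Fm3 := .ex .z ((mem3 .x .z).and (mem3 .z .y))

/-- `op(x)`: `x` is an ordered pair. -/
def op3 : Fm3 :=
  (Fm3.ex .y (.all .z ((subst3 singIn3 .z .x).iff (Fm3.eq .y .z)))).and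
    ((Fm3.all .y (.all .z
      ((((subst3 inUn3 .y .x).and (subst3 singIn3 .y .x).not).and
        ((subst3 inUn3 .z .x).and (subst3 singIn3 .z .x).not)).imp (Fm3.eq .y .z)))).and
      (Fm3.all .y (.ex .z ((mem3 .y .x).imp (mem3 .z .y)))))

/-- `p0` in `L3`: "`y` is the first component of the ordered pair `x`". -/
def p03 : Fm3 := op3.and (subst3 singIn3 .y .x)

/-- `p1` in `L3`: "`y` is the second component of the ordered pair `x`". -/
def p13 : Fm3 :=
  op3.and (dsing3.or ((subst3 inUn3 .y .x).and (subst3 singIn3 .y .x).not))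

/-- `π`: the formulas `p03`, `p13` define pairing functions: both are functional
and every two elements are the components of some ordered pair. -/
def piF : Fm3 :=
  (Fm3.all .x (.all .y (.all .z ((p03.and (subst3 p03 .x .z)).imp (Fm3.eq .y .z))))).and
    ((Fm3.all .x (.all .y (.all .z ((p13.and (subst3 p13 .x .z)).imp (Fm3.eq .y .z))))).and
      (Fm3.all .x (.all .y (.ex .z ((subst3 p03 .z .x).and (subst3 p13 .z .y))))))

/-- `π⁺`: `π` strengthened by uniqueness of pairs, equality of the domains of
the two projections, and existence of two distinct elements. -/
def piPlus : Fm3 :=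
  piF.and
    ((Fm3.all .x (.all .y
      ((((Fm3.ex .z ((subst3 p03 .x .z).and (subst3 p03 .y .z))).and
          (Fm3.ex .z ((subst3 p13 .x .z).and (subst3 p13 .y .z)))).imp (Fm3.eq .x .y))))).and
      ((Fm3.all .x ((Fm3.ex .y p03).iff (.ex .y p13))).and
        (Fm3.ex .x (.ex .y (Fm3.eq .x .y).not))))

/- The concrete parameters of `Fmd3` obtained from the definition Δ of `P`. -/

/-- `E := ∀z P(x,y,z)`. -/
def EF : Fmd3 := Fmd3.all .z .P

/-- `D := P(x,y,z) ∧ ¬E`. -/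
def DF : Fmd3 := Fmd3.P.and EF.not

def dxyC : Fmd3 := .ex .z DF
def dxzC : Fmd3 := .ex .y DF

/-- Scaffold parameters (only `dxy`, `dxz` are used by `subst2`/`eqvF`). -/
def P0 : Params := ⟨dxyC, dxzC, Fmd3.P, Fmd3.P⟩

/-- `u inn v := E⟨u,v⟩`. -/
def innF (u v : Var) : Fmd3 := subst2 P0 EF u v

/-- `x ≐ {y}`. -/
def singF : Fmd3 := .all .z ((innF .z .x).iff (eqvF P0 .z .y))

/-- `{x} inn y`. -/
def singInF : Fmd3 := .ex .z ((subst2 P0 singF .z .x).and (innF .z .y))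

/-- `x ≐ {{y}}`. -/
def dsingF : Fmd3 := .ex .z ((subst2 P0 singF .z .y).and (subst2 P0 singF .x .z))

/-- `x inn ∪y`. -/
def inUnF : Fmd3 := .ex .z ((innF .x .z).and (innF .z .y))

/-- `op(x)` in `Fmd3`. -/
def opF : Fmd3 :=
  (Fmd3.ex .y (.all .z ((subst2 P0 singInF .z .x).iff (eqvF P0 .y .z)))).and
    ((Fmd3.all .y (.all .z
      ((((subst2 P0 inUnF .y .x).and (subst2 P0 singInF .y .x).not).and
        ((subst2 P0 inUnF .z .x).and (subst2 P0 singInF .z .x).not)).imp (eqvF P0 .y .z)))).and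
      (Fmd3.all .y (.ex .z ((innF .y .x).imp (innF .z .y)))))

/-- The concrete parameter `p0` of `Fmd3`. -/
def p0C : Fmd3 := opF.and (subst2 P0 singInF .y .x)

/-- The concrete parameter `p1` of `Fmd3`. -/
def p1C : Fmd3 :=
  opF.and (dsingF.or ((subst2 P0 inUnF .y .x).and (subst2 P0 singInF .y .x).not))

/-- The concrete choice of the parameters `δxy, δxz, p0, p1`. -/
def cP : Params := ⟨dxyC, dxzC, p0C, p1C⟩

/-- `φ⟨x_i, x_j⟩ := ∃y∃z(y ≐ x_i ∧ z ≐ x_j ∧ φ⟨y,z⟩)` for `φ ∈ Fmd3²`. -/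
def substXX (φ : Fmd3) (i j : List Bool) : Fmd3 :=
  .ex .y (.ex .z ((peq cP .y [] .x i).and ((peq cP .z [] .x j).and (subst2 cP φ .y .z))))

def idx : Var → Fin 3
  | .x => 0
  | .y => 1
  | .z => 2

/-- The homomorphism `h'` from the formula algebra of `L3` into `Dca`. -/
def hprime : Fm3 → Fmd3
  | .mem => substXX EF (true :: dgt 0) (true :: dgt 1)
  | .eq u v => dijF cP (idx u) (idx v)
  | .or a b => (hprime a).or (hprime b)
  | .not a => negC cP (hprime a)
  | .ex v a => ciF cP (idx v) (hprime a)

/-- `Triplet x_1` (with the concrete parameters). -/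
def TripX1 : Fmd3 := appX cP (TripletF cP) [true]

/-- `SAx* := SAx ∧ ∀x(Triplet x_1 → h'(π⁺))`. -/
def SAxStar : Fmd3 := (SAxF cP).and (.all .x (TripX1.imp (hprime piPlus)))

/-- The translation `h : Fm3 → Fmd3⁰`. -/
def hmap (φ : Fm3) : Fmd3 := .all .x ((SAxStar.and TripX1).imp (hprime φ))


/- ===== Infrastructure: propositional combinators for Prf ===== -/

namespace Fmd3

theorem taut_refl (a : Fmd3) : (a.imp a).Taut := by
  intro v hor hnot; simp only [Fmd3.imp, hor, hnot]; cases v a <;> rfl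

theorem taut_true (a : Fmd3) : (a.or a.not).Taut := by
  intro v hor hnot; simp only [hor, hnot]; cases v a <;> rfl

theorem taut_imp_trans (a b c : Fmd3) : ((a.imp b).imp ((b.imp c).imp (a.imp c))).Taut := by
  intro v hor hnot; simp only [Fmd3.imp, hor, hnot]
  cases v a <;> cases v b <;> cases v c <;> rfl

theorem taut_andL (a b : Fmd3) : ((a.and b).imp a).Taut := by
  intro v hor hnot; simp only [Fmd3.imp, Fmd3.and, hor, hnot]; cases v a <;> cases v b <;> rfl

theorem taut_andR (a b : Fmd3) : ((a.and b).imp b).Taut := by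
  intro v hor hnot; simp only [Fmd3.imp, Fmd3.and, hor, hnot]; cases v a <;> cases v b <;> rfl

theorem taut_andIntro (a b : Fmd3) : (a.imp (b.imp (a.and b))).Taut := by
  intro v hor hnot; simp only [Fmd3.imp, Fmd3.and, hor, hnot]; cases v a <;> cases v b <;> rfl

theorem taut_andIntro2 (a b : Fmd3) : (a.imp (b.imp (b.and a))).Taut := by
  intro v hor hnot; simp only [Fmd3.imp, Fmd3.and, hor, hnot]; cases v a <;> cases v b <;> rfl

theorem taut_andComm (a b : Fmd3) : ((a.and b).imp (b.and a)).Taut := by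
  intro v hor hnot; simp only [Fmd3.imp, Fmd3.and, hor, hnot]; cases v a <;> cases v b <;> rfl

theorem taut_contrap (a b : Fmd3) : ((a.imp b).imp (b.not.imp a.not)).Taut := by
  intro v hor hnot; simp only [Fmd3.imp, hor, hnot]; cases v a <;> cases v b <;> rfl

theorem taut_impAndIntro (p q r : Fmd3) :
    ((p.imp q).imp ((p.imp r).imp (p.imp (q.and r)))).Taut := by
  intro v hor hnot; simp only [Fmd3.imp, Fmd3.and, hor, hnot]
  cases v p <;> cases v q <;> cases v r <;> rfl

theorem taut_iffIntro (a b : Fmd3) : ((a.imp b).imp ((b.imp a).imp (a.iff b))).Taut := by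
  intro v hor hnot; simp only [Fmd3.imp, Fmd3.and, Fmd3.iff, hor, hnot]
  cases v a <;> cases v b <;> rfl

theorem taut_iffL (a b : Fmd3) : ((a.iff b).imp (a.imp b)).Taut := by
  intro v hor hnot; simp only [Fmd3.imp, Fmd3.and, Fmd3.iff, hor, hnot]
  cases v a <;> cases v b <;> rfl

theorem taut_iffR (a b : Fmd3) : ((a.iff b).imp (b.imp a)).Taut := by
  intro v hor hnot; simp only [Fmd3.imp, Fmd3.and, Fmd3.iff, hor, hnot]
  cases v a <;> cases v b <;> rfl

theorem taut_notnotI (a : Fmd3) : (a.imp a.not.not).Taut := by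
  intro v hor hnot; simp only [Fmd3.imp, hor, hnot]; cases v a <;> rfl

theorem taut_notnotE (a : Fmd3) : (a.not.not.imp a).Taut := by
  intro v hor hnot; simp only [Fmd3.imp, hor, hnot]; cases v a <;> rfl

theorem taut_liftFact (f a b : Fmd3) : (f.imp (((a.and f).imp b).imp (a.imp b))).Taut := by
  intro v hor hnot; simp only [Fmd3.imp, Fmd3.and, hor, hnot]
  cases v f <;> cases v a <;> cases v b <;> rfl

theorem taut_importExport (c e f : Fmd3) :
    ((c.imp (e.imp f)).imp ((c.and e).imp f)).Taut := by
  intro v hor hnot; simp only [Fmd3.imp, Fmd3.and, hor, hnot]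
  cases v c <;> cases v e <;> cases v f <;> rfl

theorem taut_export (a b c : Fmd3) :
    (((a.and b).imp c).imp (a.imp (b.imp c))).Taut := by
  intro v hor hnot; simp only [Fmd3.imp, Fmd3.and, hor, hnot]
  cases v a <;> cases v b <;> cases v c <;> rfl

theorem taut_orElim (a b c d : Fmd3) :
    ((a.imp c).imp ((b.imp d).imp ((a.or b).imp (c.or d)))).Taut := by
  intro v hor hnot; simp only [Fmd3.imp, hor, hnot]
  cases v a <;> cases v b <;> cases v c <;> cases v d <;> rfl

theorem taut_notAnd (a b : Fmd3) : (((a.and b).not).imp (a.not.or b.not)).Taut := by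
  intro v hor hnot; simp only [Fmd3.imp, Fmd3.and, hor, hnot]
  cases v a <;> cases v b <;> rfl

theorem taut_deMorgan (X Y : Fmd3) : (((X.not).and (Y.not)).imp ((X.or Y).not)).Taut := by
  intro v hor hnot; simp only [Fmd3.imp, Fmd3.and, hor, hnot]
  cases v X <;> cases v Y <;> rfl

theorem taut_step7 (a b c d : Fmd3) :
    (((a.and b).imp d).imp ((b.and (c.and a)).imp (c.and d))).Taut := by
  intro v hor hnot; simp only [Fmd3.imp, Fmd3.and, hor, hnot]
  cases v a <;> cases v b <;> cases v c <;> cases v d <;> rfl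

theorem taut_step9 (p0 k1 b e al : Fmd3) :
    (((e.and k1).imp al).imp (((p0.and k1).and (b.and e)).imp (b.and al))).Taut := by
  intro v hor hnot; simp only [Fmd3.imp, Fmd3.and, hor, hnot]
  cases v p0 <;> cases v k1 <;> cases v b <;> cases v e <;> cases v al <;> rfl

end Fmd3

section Combinators
variable {T : Set Fmd3} {a b c d : Fmd3}

theorem impTrans (h1 : Prf T (a.imp b)) (h2 : Prf T (b.imp c)) : Prf T (a.imp c) :=
  ((Prf.taut (Fmd3.taut_imp_trans a b c)).mp h1).mp h2

theorem andIntro (h1 : Prf T a) (h2 : Prf T b) : Prf T (a.and b) :=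
  ((Prf.taut (Fmd3.taut_andIntro a b)).mp h1).mp h2

theorem andL (h : Prf T (a.and b)) : Prf T a := (Prf.taut (Fmd3.taut_andL a b)).mp h
theorem andR (h : Prf T (a.and b)) : Prf T b := (Prf.taut (Fmd3.taut_andR a b)).mp h

theorem iffIntro (h1 : Prf T (a.imp b)) (h2 : Prf T (b.imp a)) : Prf T (a.iff b) :=
  ((Prf.taut (Fmd3.taut_iffIntro a b)).mp h1).mp h2

theorem iffL (h : Prf T (a.iff b)) : Prf T (a.imp b) := (Prf.taut (Fmd3.taut_iffL a b)).mp h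
theorem iffR (h : Prf T (a.iff b)) : Prf T (b.imp a) := (Prf.taut (Fmd3.taut_iffR a b)).mp h

theorem iffTrans (h1 : Prf T (a.iff b)) (h2 : Prf T (b.iff c)) : Prf T (a.iff c) :=
  iffIntro (impTrans (iffL h1) (iffL h2)) (impTrans (iffR h2) (iffR h1))

theorem contrap (h : Prf T (a.imp b)) : Prf T (b.not.imp a.not) :=
  (Prf.taut (Fmd3.taut_contrap a b)).mp h

theorem impAndIntro (h1 : Prf T (a.imp b)) (h2 : Prf T (a.imp c)) : Prf T (a.imp (b.and c)) :=
  ((Prf.taut (Fmd3.taut_impAndIntro a b c)).mp h1).mp h2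

theorem liftFact (hf : Prf T c) (h : Prf T ((a.and c).imp b)) : Prf T (a.imp b) :=
  ((Prf.taut (Fmd3.taut_liftFact c a b)).mp hf).mp h

theorem monoEx (v : Var) (h : Prf T (a.imp b)) : Prf T ((Fmd3.ex v a).imp (Fmd3.ex v b)) :=
  (Prf.ax2 v a b).mp (Prf.gen v h)

theorem monoAll (v : Var) (h : Prf T (a.imp b)) : Prf T ((Fmd3.all v a).imp (Fmd3.all v b)) :=
  contrap (monoEx v (contrap h))

theorem allCongr (v : Var) (h : Prf T (a.iff b)) : Prf T ((Fmd3.all v a).iff (Fmd3.all v b)) :=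
  iffIntro (monoAll v (iffL h)) (monoAll v (iffR h))

theorem allAnd1 (v : Var) (a b : Fmd3) :
    Prf T (((Fmd3.all v a).and (Fmd3.all v b)).imp (Fmd3.all v (a.and b))) := by
  have c1 : Prf T ((Fmd3.ex v (a.and b).not).imp ((Fmd3.ex v a.not).or (Fmd3.ex v b.not))) :=
    impTrans (monoEx v (Prf.taut (Fmd3.taut_notAnd a b))) (iffL (Prf.ax5 v a.not b.not))
  have c2 := contrap c1
  exact impTrans (Prf.taut (Fmd3.taut_deMorgan (Fmd3.ex v a.not) (Fmd3.ex v b.not))) c2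

theorem allAnd2 (v : Var) (a b : Fmd3) :
    Prf T ((Fmd3.all v (a.and b)).imp ((Fmd3.all v a).and (Fmd3.all v b))) :=
  impAndIntro (monoAll v (Prf.taut (Fmd3.taut_andL a b)))
    (monoAll v (Prf.taut (Fmd3.taut_andR a b)))

end Combinators

/- ===== Fix (provably v-independent formulas) ===== -/

def IsFix (T : Set Fmd3) (v : Var) (φ : Fmd3) : Prop := Prf T ((Fmd3.ex v φ).imp φ)

section Fix
variable {T : Set Fmd3} {a b : Fmd3} {v w : Var}

theorem fixEx (v : Var) (a : Fmd3) : IsFix T v (Fmd3.ex v a) := Prf.ax4 v a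

theorem fixNot (h : IsFix T v a) : IsFix T v a.not :=
  impTrans (monoEx v (contrap h))
    (impTrans (Prf.ax6 v a) (contrap (Prf.ax3 v a)))

theorem fixOr (ha : IsFix T v a) (hb : IsFix T v b) : IsFix T v (a.or b) :=
  impTrans (iffL (Prf.ax5 v a b)) (((Prf.taut (Fmd3.taut_orElim _ _ _ _)).mp ha).mp hb)

theorem fixAnd (ha : IsFix T v a) (hb : IsFix T v b) : IsFix T v (a.and b) :=
  fixNot (fixOr (fixNot ha) (fixNot hb))

theorem fixExOther (w : Var) (h : IsFix T v a) : IsFix T v (Fmd3.ex w a) :=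
  impTrans (Prf.ax7 v w a) (monoEx w h)

/-- `c ∧ ∃v ψ → ∃v (ψ ∧ c)` provided `c` is provably `v`-independent. -/
theorem fixPull (ψ : Fmd3) (hc : IsFix T v a) :
    Prf T ((a.and (Fmd3.ex v ψ)).imp (Fmd3.ex v (ψ.and a))) := by
  have s2 : Prf T (a.imp (Fmd3.all v a)) :=
    impTrans (Prf.taut (Fmd3.taut_notnotI a)) (contrap (fixNot hc))
  have s3 : Prf T ((Fmd3.all v a).imp (Fmd3.all v (ψ.imp (ψ.and a)))) :=
    monoAll v (Prf.taut (Fmd3.taut_andIntro2 a ψ))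
  have s4 : Prf T (a.imp ((Fmd3.ex v ψ).imp (Fmd3.ex v (ψ.and a)))) :=
    impTrans s2 (impTrans s3 (Prf.ax2 v ψ (ψ.and a)))
  exact (Prf.taut (Fmd3.taut_importExport a (Fmd3.ex v ψ) (Fmd3.ex v (ψ.and a)))).mp s4

theorem exElimImp (h : Prf T (a.imp b)) (hb : IsFix T v b) :
    Prf T ((Fmd3.ex v a).imp b) := impTrans (monoEx v h) hb

end Fix

/- ===== extracting conjuncts of conjF ===== -/

theorem taut_conj_mem (P : Params) : ∀ (l : List Fmd3) (φ : Fmd3), φ ∈ l →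
    ((conjF P l).imp φ).Taut := by
  intro l
  induction l with
  | nil => intro φ h; cases h
  | cons a rest ih =>
    intro φ h
    cases rest with
    | nil =>
      rcases List.mem_singleton.mp h with rfl
      exact Fmd3.taut_refl _
    | cons b t =>
      have hc : conjF P (a :: b :: t) = a.and (conjF P (b :: t)) := rfl
      rw [hc]
      rcases List.mem_cons.mp h with rfl | h'
      · exact Fmd3.taut_andL _ _
      · have ht := ih φ h'
        intro v hor hnot
        have := ht v hor hnot
        simp only [Fmd3.imp, Fmd3.and, hor, hnot] at this ⊢
        cases hva : v a <;> cases hvc : v (conjF P (b :: t)) <;>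
          cases hvf : v φ <;> simp_all

theorem prfConjMem {T : Set Fmd3} {P : Params} {l : List Fmd3} {φ : Fmd3}
    (hc : Prf T (conjF P l)) (h : φ ∈ l) : Prf T φ :=
  (Prf.taut (taut_conj_mem P l φ h)).mp hc

/- ===== membership lemmas for the axiom lists ===== -/

theorem mem_axA1 (P : Params) (u v w : Var) (i j k : List Bool)
    (hu : u ∈ vars3) (hv : v ∈ vars3) (hw : w ∈ vars3)
    (hi : i ∈ seqH) (hj : j ∈ seqH) (hk : k ∈ seqH) :
    (((peq P u i v j).and (peq P v j w k)).imp (peq P u i w k)) ∈ axA1 P := by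
  simp only [axA1, List.mem_flatMap, List.mem_map]
  exact ⟨u, hu, v, hv, w, hw, i, hi, j, hj, k, hk, rfl⟩

theorem mem_axA3 (P : Params) (u v w : Var) (i j : List Bool)
    (hu : u ∈ vars3) (hv : v ∈ vars3)
    (hw : w ∈ vars3.filter fun w => decide (w ≠ u ∧ w ≠ v))
    (hi : i ∈ seqH) (hj : j ∈ seqH) :
    (((peq P u i u i).and (peq P v j v j)).imp
      (.ex w ((peq P w [false] u i).and (peq P w [true] v j)))) ∈ axA3 P := by
  simp only [axA3, List.mem_flatMap, List.mem_map]
  exact ⟨u, hu, v, hv, w, hw, i, hi, j, hj, rfl⟩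

theorem mem_axA4 (P : Params) (u w : Var) (hu : u ∈ vars3) (hw : w ∈ vars3) :
    (Fmd3.ex w (eqvF P u w)) ∈ axA4 P := by
  simp only [axA4, List.mem_flatMap, List.mem_map]
  exact ⟨u, hu, w, hw, rfl⟩

/- ===== the concrete derivation: SAx* ⊢ ∃x TripX1 ===== -/

namespace TripDer

def TT : Set Fmd3 := {SAxStar}

def exy : Fmd3 := eqvF cP .x .y
def exz : Fmd3 := eqvF cP .x .z
def eyz : Fmd3 := eqvF cP .y .z
def k1 : Fmd3 := pform cP true .x .z
def k2 : Fmd3 := pform cP true .z .y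
def DD : Fmd3 := .ex .z (k1.and k2)
def Trip : Fmd3 := TripletF cP
def PXZ : Fmd3 := .ex .y (DD.and k2)
def PZX : Fmd3 := .ex .y (k2.and DD)
def bet : Fmd3 := .ex .x (exy.and Trip)
def alf : Fmd3 := .ex .z (eyz.and k1)
def GG : Fmd3 := .ex .x TripX1

theorem hS : Prf TT SAxStar := Prf.hyp rfl
theorem hSAx : Prf TT (SAxF cP) := andL (b := Fmd3.all .x (TripX1.imp (hprime piPlus))) hS
theorem hAxF : Prf TT (AxF cP) := andL hSAx

theorem prfAxMem {φ : Fmd3} (h : φ ∈ axA1 cP ++ axA2 cP ++ axA3 cP ++ axA4 cP) :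
    Prf TT φ := prfConjMem hAxF h

theorem instA1 (u v w : Var) (i j k : List Bool)
    (hi : i ∈ seqH := by decide) (hj : j ∈ seqH := by decide) (hk : k ∈ seqH := by decide)
    (hu : u ∈ vars3 := by decide) (hv : v ∈ vars3 := by decide) (hw : w ∈ vars3 := by decide) :
    Prf TT (((peq cP u i v j).and (peq cP v j w k)).imp (peq cP u i w k)) :=
  prfAxMem (List.mem_append_left _ (List.mem_append_left _ (List.mem_append_left _
    (mem_axA1 cP u v w i j k hu hv hw hi hj hk))))

theorem instA3 (u v w : Var) (i j : List Bool)
    (hw : w ∈ vars3.filter fun w => decide (w ≠ u ∧ w ≠ v) := by decide)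
    (hi : i ∈ seqH := by decide) (hj : j ∈ seqH := by decide)
    (hu : u ∈ vars3 := by decide) (hv : v ∈ vars3 := by decide) :
    Prf TT (((peq cP u i u i).and (peq cP v j v j)).imp
      (.ex w ((peq cP w [false] u i).and (peq cP w [true] v j)))) :=
  prfAxMem (List.mem_append_left _ (List.mem_append_right _
    (mem_axA3 cP u v w i j hu hv hw hi hj)))

theorem instA4 (u w : Var) (hu : u ∈ vars3 := by decide) (hw : w ∈ vars3 := by decide) :
    Prf TT (Fmd3.ex w (eqvF cP u w)) :=
  prfAxMem (List.mem_append_right _ (mem_axA4 cP u w hu hw))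

theorem tTrue : Prf TT (trueF cP) := Prf.taut (Fmd3.taut_true _)

-- pairs over y, placed in z :  ⊢ ∃z (z₀ ≐ y ∧ z₁ ≐ y)
theorem e1 : Prf TT (Fmd3.ex .z ((pform cP false .z .y).and k2)) :=
  (instA3 .y .y .z [] []).mp (andIntro tTrue tTrue)

theorem e1' : Prf TT (Fmd3.ex .z k2) :=
  (monoEx .z (Prf.taut (Fmd3.taut_andR _ _))).mp e1

-- pairs over z, placed in x
theorem e2 : Prf TT (Fmd3.ex .x ((pform cP false .x .z).and k1)) :=
  (instA3 .z .z .x [] []).mp (andIntro tTrue tTrue)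

theorem e2' : Prf TT (Fmd3.ex .x k1) :=
  (monoEx .x (Prf.taut (Fmd3.taut_andR _ _))).mp e2

-- Fix facts
theorem fixZexy : IsFix TT .z exy := fixEx .z _
theorem fixZTrip : IsFix TT .z Trip := fixExOther .y (fixAnd fixZexy (fixEx .z _))
theorem fixZbet : IsFix TT .z bet := fixExOther .x (fixAnd fixZexy fixZTrip)
theorem fixXG : IsFix TT .x GG := fixEx .x _
theorem fixYG : IsFix TT .y GG := fixExOther .x (fixEx .y _)
theorem fixZG : IsFix TT .z GG :=
  fixExOther .x (fixExOther .y (fixAnd (fixEx .z _) fixZbet))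

-- Step 2 : k2 → ∃x (k1 ∧ k2)
theorem s2 : Prf TT (k2.imp (Fmd3.ex .x (k1.and k2))) :=
  liftFact e2' (fixPull k1 (fixEx .x _))

-- Step 3 : k1 ∧ k2 → Trip
theorem s3 : Prf TT ((k1.and k2).imp Trip) := by
  have a3a : Prf TT ((k1.and k2).imp DD) := Prf.ax3 .z (k1.and k2)
  have a3b : Prf TT ((k1.and k2).imp (DD.and k2)) :=
    impAndIntro a3a (Prf.taut (Fmd3.taut_andR _ _))
  have a3c : Prf TT ((DD.and k2).imp PXZ) := Prf.ax3 .y (DD.and k2)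
  have a3d : Prf TT (PXZ.imp PZX) := monoEx .y (Prf.taut (Fmd3.taut_andComm DD k2))
  have a3e : Prf TT ((PXZ.and PZX).imp Trip) :=
    instA1 .x .z .x [true, true] [true] [true, true]
  exact impTrans (impTrans a3b a3c)
    (impTrans (impAndIntro (Prf.taut (Fmd3.taut_refl PXZ)) a3d) a3e)

-- Step 4 : Trip → ∃y (exy ∧ Trip)
theorem s4 : Prf TT (Trip.imp (Fmd3.ex .y (exy.and Trip))) :=
  liftFact (instA4 .x .y) (fixPull exy (fixEx .y _ : IsFix TT .y Trip))

-- Step 5 : exy ∧ Trip → bet ∧ exy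
theorem s5 : Prf TT ((exy.and Trip).imp (bet.and exy)) :=
  impAndIntro (Prf.ax3 .x (exy.and Trip)) (Prf.taut (Fmd3.taut_andL _ _))

-- Step 6 : bet ∧ exy → ∃z (exz ∧ (bet ∧ exy))
theorem s6 : Prf TT ((bet.and exy).imp (Fmd3.ex .z (exz.and (bet.and exy)))) :=
  liftFact (instA4 .x .z) (fixPull exz (fixAnd fixZbet fixZexy))

-- Step 7 : exz ∧ (bet ∧ exy) → bet ∧ eyz
theorem s7 : Prf TT ((exz.and (bet.and exy)).imp (bet.and eyz)) :=
  (Prf.taut (Fmd3.taut_step7 exy exz bet eyz)).mp (instA1 .y .x .z [] [] [])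

-- Step 8 : bet ∧ eyz → ∃x ((p0xz ∧ k1) ∧ (bet ∧ eyz))
theorem s8 : Prf TT ((bet.and eyz).imp
    (Fmd3.ex .x (((pform cP false .x .z).and k1).and (bet.and eyz)))) :=
  liftFact e2 (fixPull _ (fixAnd (fixEx .x _) (fixEx .x _)))

-- Step 9 : (p0xz ∧ k1) ∧ (bet ∧ eyz) → bet ∧ alf
theorem s9 : Prf TT ((((pform cP false .x .z).and k1).and (bet.and eyz)).imp
    (bet.and alf)) :=
  (Prf.taut (Fmd3.taut_step9 (pform cP false .x .z) k1 bet eyz alf)).mp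
    (Prf.ax3 .z (eyz.and k1))

-- Step 10/11
theorem s10 : Prf TT ((bet.and alf).imp TripX1) :=
  impTrans (Prf.taut (Fmd3.taut_andComm bet alf)) (Prf.ax3 .y (alf.and bet))

theorem s11 : Prf TT (TripX1.imp GG) := Prf.ax3 .x TripX1

-- assembly
theorem exTripX1 : Prf TT (Fmd3.ex .x TripX1) := by
  have g10 := impTrans s10 s11
  have g9 := impTrans s9 g10
  have g8' := exElimImp g9 fixXG
  have g8 := impTrans s8 g8'
  have g7 := impTrans s7 g8
  have g6' := exElimImp g7 fixZG
  have g6 := impTrans s6 g6'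
  have g5 := impTrans s5 g6
  have g4' := exElimImp g5 fixYG
  have g4 := impTrans s4 g4'
  have g3 := impTrans s3 g4
  have g2' := exElimImp g3 fixXG
  have g2 := impTrans s2 g2'
  have g1' := exElimImp g2 fixZG
  exact g1'.mp e1'

end TripDer

/- ===== final tautologies ===== -/

namespace Fmd3

theorem taut_part1 (S T A B : Fmd3) :
    ((((S.and T).imp (T.and (((T.and A.not).or (T.and B.not)).not)))).iff
      ((((S.and T).imp A)).and (((S.and T).imp B)))).Taut := by
  intro v hor hnot
  simp only [Fmd3.imp, Fmd3.and, Fmd3.iff, hor, hnot]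
  cases v S <;> cases v T <;> cases v A <;> cases v B <;> rfl

theorem taut_part2 (S T A B : Fmd3) :
    ((((S.and T).imp ((T.and A.not).or B)).and ((S.and T).imp A)).imp
      ((S.and T).imp B)).Taut := by
  intro v hor hnot
  simp only [Fmd3.imp, Fmd3.and, hor, hnot]
  cases v S <;> cases v T <;> cases v A <;> cases v B <;> rfl

theorem taut_part3a (S T A : Fmd3) :
    (S.imp (((((S.and T).imp (T.and A.not))).and ((S.and T).imp A)).imp T.not)).Taut := by
  intro v hor hnot
  simp only [Fmd3.imp, Fmd3.and, hor, hnot]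
  cases v S <;> cases v T <;> cases v A <;> rfl

theorem taut_part3b (e h1 h2 : Fmd3) :
    (e.imp (((h1.and h2).imp e.not).imp (h1.imp h2.not))).Taut := by
  intro v hor hnot
  simp only [Fmd3.imp, Fmd3.and, hor, hnot]
  cases v e <;> cases v h1 <;> cases v h2 <;> rfl

end Fmd3

/-- **Theorem (h is Boolean preserving w.r.t. ⊢d3).** For all sentences `φ`, `ψ`
of `L3`: `⊢d3 h(φ∧ψ) ↔ (h(φ) ∧ h(ψ))` and `⊢d3 h(φ→ψ) → (h(φ) → h(ψ))`;
moreover `SAx* ⊢d3 h(¬φ) → ¬h(φ)`. -/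
theorem h_is_Boolean_preserving :
    (∀ φ ψ : Fm3, φ.IsSentence → ψ.IsSentence →
      Prf ∅ ((hmap (φ.and ψ)).iff ((hmap φ).and (hmap ψ))) ∧
      Prf ∅ ((hmap (φ.imp ψ)).imp ((hmap φ).imp (hmap ψ)))) ∧
    (∀ φ : Fm3, φ.IsSentence → Prf {SAxStar} ((hmap φ.not).imp (hmap φ).not)) := by
  refine ⟨fun φ ψ _ _ => ⟨?_, ?_⟩, fun φ _ => ?_⟩
  · -- conjunction
    have t1 : Prf (∅ : Set Fmd3)
        ((((SAxStar.and TripX1).imp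
            (TripX1.and (((TripX1.and (hprime φ).not).or (TripX1.and (hprime ψ).not)).not))).iff
          ((((SAxStar.and TripX1).imp (hprime φ))).and
            (((SAxStar.and TripX1).imp (hprime ψ)))))) :=
      Prf.taut (Fmd3.taut_part1 SAxStar TripX1 (hprime φ) (hprime ψ))
    have l1 := allCongr .x t1
    have l2 := iffIntro
      (allAnd2 (T := (∅ : Set Fmd3)) .x ((SAxStar.and TripX1).imp (hprime φ))
        ((SAxStar.and TripX1).imp (hprime ψ)))
      (allAnd1 .x ((SAxStar.and TripX1).imp (hprime φ))
        ((SAxStar.and TripX1).imp (hprime ψ)))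
    exact iffTrans l1 l2
  · -- implication
    have m1 := monoAll (T := (∅ : Set Fmd3)) .x
      (Prf.taut (Fmd3.taut_part2 SAxStar TripX1 (hprime φ) (hprime ψ)))
    have m2 := impTrans (allAnd1 .x ((SAxStar.and TripX1).imp ((TripX1.and (hprime φ).not).or (hprime ψ)))
      ((SAxStar.and TripX1).imp (hprime φ))) m1
    exact (Prf.taut (Fmd3.taut_export _ _ _)).mp m2
  · -- negation
    have hS : Prf {SAxStar} SAxStar := Prf.hyp rfl
    have c1 := (Prf.taut (Fmd3.taut_part3a SAxStar TripX1 (hprime φ))).mp hS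
    have c2 := monoAll .x c1
    have c3 := impTrans (allAnd1 .x ((SAxStar.and TripX1).imp (TripX1.and (hprime φ).not))
      ((SAxStar.and TripX1).imp (hprime φ))) c2
    have d2 := (monoEx .x (Prf.taut (Fmd3.taut_notnotI TripX1))).mp TripDer.exTripX1
    exact ((Prf.taut (Fmd3.taut_part3b (Fmd3.ex .x TripX1.not.not)
      (Fmd3.all .x ((SAxStar.and TripX1).imp (TripX1.and (hprime φ).not)))
      (Fmd3.all .x ((SAxStar.and TripX1).imp (hprime φ))))).mp d2).mp c3
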